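/- arXiv:2602.23209 — 3 statements merged into one kernel-verified Lean document; each statement's English description precedes it below -/
import Mathlib

section
/- Fix ã > 0 and n ≥ 0. As q → 1⁻ with α/a = (1-q)·ã held fixed, the q-Poisson probability (α/a; q)_∞ · (α/a)^n / (q; q)_n converges to the Poisson probability e^{-ã} · ã^n / n!. -/
/-!
Taking logarithms, `-t / (1 - t) ≤ log (1 - t) ≤ -t` for `0 ≤ t < 1` squeezes `log (x; q)_∞`
between `-x / ((1 - q)(1 - x))` and `-x / (1 - q)`; for `x = (1 - q)ã` both bounds tend to `-ã`.
The finite part is `(q; q)_n = (1 - q)^n [n]_q!`, so `x^n / (q; q)_n = ã^n / [n]_q!` and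
`[n]_q! → n!` by continuity.
-/

open Filter

/-- The infinite q-Pochhammer symbol `(x; q)_∞`. -/
noncomputable def qPochInf (x q : ℝ) : ℝ := ∏' ℓ : ℕ, (1 - x * q ^ ℓ)

/-- The finite q-Pochhammer symbol `(a; q)_n`. -/
def qPoch (a q : ℝ) (n : ℕ) : ℝ := ∏ ℓ ∈ Finset.range n, (1 - a * q ^ ℓ)

open Topology Real Finset

section qPochInf

variable {x q : ℝ}

lemma mul_pow_lt_one (hx : x < 1) (hq0 : 0 ≤ q) (hq1 : q ≤ 1) (ℓ : ℕ) : x * q ^ ℓ < 1 := by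
  have h0 : 0 ≤ q ^ ℓ := pow_nonneg hq0 ℓ
  have h1 : q ^ ℓ ≤ 1 := pow_le_one₀ hq0 hq1
  rcases le_or_gt 0 x with hx0 | hx0 <;> nlinarith

lemma summable_log_one_sub_mul_pow (hq0 : 0 ≤ q) (hq1 : q < 1) :
    Summable fun ℓ : ℕ => log (1 - x * q ^ ℓ) := by
  simpa only [sub_eq_add_neg] using
    summable_log_one_add_of_summable ((summable_geometric_of_lt_one hq0 hq1).mul_left x).neg

lemma qPochInf_eq_exp_tsum_log (hx : x < 1) (hq0 : 0 ≤ q) (hq1 : q < 1) :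
    qPochInf x q = exp (∑' ℓ : ℕ, log (1 - x * q ^ ℓ)) :=
  (rexp_tsum_eq_tprod (fun ℓ => sub_pos.2 (mul_pow_lt_one hx hq0 hq1.le ℓ))
    (summable_log_one_sub_mul_pow hq0 hq1)).symm

lemma qPochInf_le_exp (hx : x < 1) (hq0 : 0 ≤ q) (hq1 : q < 1) :
    qPochInf x q ≤ exp (-(x / (1 - q))) := by
  rw [qPochInf_eq_exp_tsum_log hx hq0 hq1, exp_le_exp, div_eq_mul_inv]
  refine hasSum_le (fun ℓ => ?_) (summable_log_one_sub_mul_pow hq0 hq1).hasSum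
    ((hasSum_geometric_of_lt_one hq0 hq1).mul_left x).neg
  have := log_le_sub_one_of_pos (sub_pos.2 (mul_pow_lt_one hx hq0 hq1.le ℓ))
  linarith

lemma exp_le_qPochInf (hx0 : 0 ≤ x) (hx1 : x < 1) (hq0 : 0 ≤ q) (hq1 : q < 1) :
    exp (-(x / ((1 - q) * (1 - x)))) ≤ qPochInf x q := by
  rw [qPochInf_eq_exp_tsum_log hx1 hq0 hq1, exp_le_exp,
    show x / ((1 - q) * (1 - x)) = x * (1 - q)⁻¹ / (1 - x) by
      rw [div_mul_eq_div_div_swap]; ring]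
  refine hasSum_le (fun ℓ => ?_) (((hasSum_geometric_of_lt_one hq0 hq1).mul_left x).div_const
    (1 - x)).neg (summable_log_one_sub_mul_pow hq0 hq1).hasSum
  have ht : 0 < 1 - x * q ^ ℓ := sub_pos.2 (mul_pow_lt_one hx1 hq0 hq1.le ℓ)
  have hlog := one_sub_inv_le_log_of_pos ht
  have hle : x * q ^ ℓ / (1 - x * q ^ ℓ) ≤ x * q ^ ℓ / (1 - x) :=
    div_le_div_of_nonneg_left (by positivity) (by linarith) <| by
      nlinarith [pow_le_one₀ (n := ℓ) hq0 hq1.le]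
  have : 1 - (1 - x * q ^ ℓ)⁻¹ = -(x * q ^ ℓ / (1 - x * q ^ ℓ)) := by field_simp; ring
  linarith

lemma tendsto_qPochInf_one_sub_mul {a : ℝ} (ha : 0 ≤ a) :
    Tendsto (fun q => qPochInf ((1 - q) * a) q) (𝓝[<] 1) (𝓝 (exp (-a))) := by
  have hlower : Tendsto (fun q : ℝ => exp (-(a / (1 - (1 - q) * a)))) (𝓝[<] 1) (𝓝 (exp (-a))) := by
    have : ContinuousAt (fun q : ℝ => exp (-(a / (1 - (1 - q) * a)))) 1 := by
      fun_prop (disch := simp)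
    simpa using this.tendsto.mono_left nhdsWithin_le_nhds
  have hx : Tendsto (fun q : ℝ => (1 - q) * a) (𝓝[<] 1) (𝓝 0) := by
    have : Continuous fun q : ℝ => (1 - q) * a := by fun_prop
    simpa using (this.tendsto 1).mono_left nhdsWithin_le_nhds
  have hq0 : ∀ᶠ q : ℝ in 𝓝[<] 1, 0 ≤ q :=
    (tendsto_nhdsWithin_of_tendsto_nhds tendsto_id).eventually_const_le zero_lt_one
  have hq1 : ∀ᶠ q : ℝ in 𝓝[<] 1, q < 1 := self_mem_nhdsWithin
  refine tendsto_of_tendsto_of_tendsto_of_le_of_le' hlower tendsto_const_nhds ?_ ?_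
  · filter_upwards [hq0, hq1, hx.eventually_lt_const zero_lt_one] with q hq0 hq1 hx1
    have h := exp_le_qPochInf (by nlinarith) hx1 hq0 hq1
    rwa [mul_div_mul_left _ _ (sub_ne_zero.2 hq1.ne')] at h
  · filter_upwards [hq0, hq1, hx.eventually_lt_const zero_lt_one] with q hq0 hq1 hx1
    have h := qPochInf_le_exp hx1 hq0 hq1
    rwa [mul_div_cancel_left₀ _ (sub_ne_zero.2 hq1.ne')] at h

end qPochInf

/-- The q-factorial `[n]_q! = [1]_q [2]_q ⋯ [n]_q`, with `[k]_q = 1 + q + ⋯ + q^(k-1)`. -/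
def qFactorial (q : ℝ) (n : ℕ) : ℝ := ∏ ℓ ∈ range n, ∑ i ∈ range (ℓ + 1), q ^ i

lemma qPoch_self_eq_mul_qFactorial (q : ℝ) (n : ℕ) :
    qPoch q q n = (1 - q) ^ n * qFactorial q n := by
  calc qPoch q q n = ∏ ℓ ∈ range n, (1 - q) * ∑ i ∈ range (ℓ + 1), q ^ i :=
        prod_congr rfl fun ℓ _ => by rw [mul_neg_geom_sum, pow_succ']
    _ = (1 - q) ^ n * qFactorial q n := by
      rw [prod_mul_distrib, prod_const, card_range, qFactorial]

lemma qFactorial_one (n : ℕ) : qFactorial 1 n = n.factorial := by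
  simp [qFactorial, ← prod_range_add_one_eq_factorial]

lemma continuous_qFactorial (n : ℕ) : Continuous fun q => qFactorial q n := by
  unfold qFactorial
  fun_prop

lemma tendsto_one_sub_mul_pow_div_qPoch (a : ℝ) (n : ℕ) :
    Tendsto (fun q => ((1 - q) * a) ^ n / qPoch q q n) (𝓝[<] 1) (𝓝 (a ^ n / n.factorial)) := by
  have h : Tendsto (fun q => a ^ n / qFactorial q n) (𝓝[<] 1) (𝓝 (a ^ n / n.factorial)) := by
    rw [← qFactorial_one]
    exact (tendsto_const_nhds.div ((continuous_qFactorial n).tendsto 1)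
      (by rw [qFactorial_one]; positivity)).mono_left nhdsWithin_le_nhds
  refine h.congr' ?_
  filter_upwards [self_mem_nhdsWithin] with q (hq : q < 1)
  rw [qPoch_self_eq_mul_qFactorial, mul_pow,
    mul_div_mul_left _ _ (pow_ne_zero _ (sub_ne_zero.2 hq.ne'))]

/-- As `q → 1⁻` with `α/a = (1-q)·ã` fixed, the q-Poisson probability
`(x;q)_∞ x^n/(q;q)_n` (with `x = (1-q)ã`) converges to the Poisson probability
`e^{-ã} ã^n / n!`. Here `atil` plays the role of `ã`. -/
theorem qPoisson_to_poisson (atil : ℝ) (hatil : 0 < atil) (n : ℕ) :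
    Tendsto (fun q : ℝ =>
        qPochInf ((1 - q) * atil) q * ((1 - q) * atil) ^ n / qPoch q q n)
      (nhdsWithin 1 (Set.Iio 1))
      (nhds (Real.exp (-atil) * atil ^ n / n.factorial)) := by
  simp only [mul_div_assoc]
  exact (tendsto_qPochInf_one_sub_mul hatil.le).mul (tendsto_one_sub_mul_pow_div_qPoch atil n)
end

section
/- Consider the semi-discrete system ∂_τ z_n = (z_{n-1} - z_n)(1 + y_n z_n), -∂_τ y_n = (y_{n+1} - y_n)(1 + y_n z_n) for n ∈ ℤ. Define the 2×2 matrices L_n(λ) = (1+y_n z_n)^{-1/2} · [[1/λ, (λ - 1/λ) z_n], [-y_n/λ, λ + y_n z_n/λ]] and U_n(λ) = [[(λ²-1)/2 + y_n z_{n-1}/2, (1-λ²) z_{n-1}], [y_n, -(λ²-1)/2 - y_n z_{n-1}/2]]. Then the zero-curvature (compatibility) equation ∂_τ L_n = U_{n+1} L_n - L_n U_n holds for every λ ∈ ℂ if and only if (z_n, y_n) satisfy the semi-discrete system (wherever 1 + y_n z_n ≠ 0). -/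
open Matrix

/-- The Lax matrix `L_n(λ)` of the weak noise theory of the continuous time q-TASEP. -/
noncomputable def Lmat (z y : ℤ → ℝ → ℝ) (n : ℤ) (τ : ℝ) (lam : ℂ) :
    Matrix (Fin 2) (Fin 2) ℂ :=
  ((Real.sqrt (1 + y n τ * z n τ))⁻¹ : ℝ) •
    !![1 / lam, (lam - 1 / lam) * (z n τ : ℂ);
       -(y n τ : ℂ) / lam, lam + (y n τ : ℂ) * (z n τ : ℂ) / lam]

/-- The Lax matrix `U_n(λ)` of the weak noise theory of the continuous time q-TASEP. -/
noncomputable def Umat (z y : ℤ → ℝ → ℝ) (n : ℤ) (τ : ℝ) (lam : ℂ) :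
    Matrix (Fin 2) (Fin 2) ℂ :=
  !![(lam ^ 2 - 1) / 2 + (y n τ : ℂ) * (z (n - 1) τ : ℂ) / 2,
       (1 - lam ^ 2) * (z (n - 1) τ : ℂ);
     (y n τ : ℂ),
       -((lam ^ 2 - 1) / 2) - (y n τ : ℂ) * (z (n - 1) τ : ℂ) / 2]

/-!
Write `L_n = g^{-1/2} M` with `g = 1 + y_n z_n`. Differentiating the prefactor contributes
`-(g'/2g) M`, and `U_{n+1} L_n - L_n U_n` carries the same prefactor, so after cancelling it the
zero-curvature equation is an identity between rational functions of `λ`. Its defect depends on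
the velocities `(y_n', z_n')` only through the residuals of the two equations of motion and
vanishes when both residuals do; conversely, at `λ = 2` its `(0,0)`, `(0,1)` and `(1,0)` entries
force both residuals to vanish.
-/

noncomputable def laxM (y z lam : ℂ) : Matrix (Fin 2) (Fin 2) ℂ :=
  !![1 / lam, (lam - 1 / lam) * z; -y / lam, lam + y * z / lam]

noncomputable def laxMDeriv (y z y' z' lam : ℂ) : Matrix (Fin 2) (Fin 2) ℂ :=
  !![0, (lam - 1 / lam) * z'; -y' / lam, (y' * z + y * z') / lam]

noncomputable def laxU (y zPrev lam : ℂ) : Matrix (Fin 2) (Fin 2) ℂ :=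
  !![(lam ^ 2 - 1) / 2 + y * zPrev / 2, (1 - lam ^ 2) * zPrev;
     y, -((lam ^ 2 - 1) / 2) - y * zPrev / 2]

theorem laxMDeriv_zero_zero (y z lam : ℂ) : laxMDeriv y z 0 0 lam = 0 := by
  ext i j; fin_cases i <;> fin_cases j <;> simp [laxMDeriv]

theorem laxMDeriv_sub_smul_laxM_sub_commutator (y z yNext zPrev a b lam : ℂ)
    (hg : 1 + y * z ≠ 0) (hlam : lam ≠ 0) :
    let y' := a - (yNext - y) * (1 + y * z)
    let z' := b + (zPrev - z) * (1 + y * z)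
    laxMDeriv y z y' z' lam - ((y' * z + y * z') / (2 * (1 + y * z))) • laxM y z lam
        - (laxU yNext z lam * laxM y z lam - laxM y z lam * laxU y zPrev lam) =
      laxMDeriv y z a b lam - ((a * z + y * b) / (2 * (1 + y * z))) • laxM y z lam := by
  dsimp only
  have hg' : 1 + z * y ≠ 0 := by rwa [mul_comm]
  ext i j
  fin_cases i <;> fin_cases j <;>
    simp only [laxMDeriv, laxM, laxU, Matrix.sub_apply, Matrix.smul_apply, Matrix.mul_apply,
      Fin.sum_univ_two, of_apply, cons_val', cons_val_zero, cons_val_one, cons_val_fin_one,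
      empty_val', Fin.zero_eta, Fin.mk_one, Fin.isValue, smul_eq_mul] <;>
    field_simp <;> ring

theorem eq_zero_of_laxMDeriv_two_eq_smul_laxM {y z y' z' c : ℂ}
    (h : laxMDeriv y z y' z' 2 = c • laxM y z 2) : y' = 0 ∧ z' = 0 := by
  have h00 := congrFun (congrFun h 0) 0
  have h01 := congrFun (congrFun h 0) 1
  have h10 := congrFun (congrFun h 1) 0
  simp only [laxMDeriv, laxM, Matrix.smul_apply, of_apply, cons_val', cons_val_zero, cons_val_one,
    cons_val_fin_one, empty_val', Fin.isValue, smul_eq_mul] at h00 h01 h10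
  obtain rfl : c = 0 := by linear_combination -2 * h00
  exact ⟨by linear_combination -2 * h10, by linear_combination (2 / 3 : ℂ) * h01⟩

theorem hasDerivAt_inv_sqrt {f : ℝ → ℝ} {f' x : ℝ} (hf : HasDerivAt f f' x) (hx : 0 < f x) :
    HasDerivAt (fun s => (√(f s))⁻¹) (-(f' / (2 * f x)) * (√(f x))⁻¹) x := by
  refine ((hf.sqrt hx.ne').inv (Real.sqrt_ne_zero'.2 hx)).congr_deriv ?_
  rw [Real.sq_sqrt hx.le]
  field_simp

theorem hasDerivAt_laxM_apply {y z : ℝ → ℝ} {y' z' τ : ℝ} (hy : HasDerivAt y y' τ)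
    (hz : HasDerivAt z z' τ) (lam : ℂ) (i j : Fin 2) :
    HasDerivAt (fun s => laxM (y s) (z s) lam i j) (laxMDeriv (y τ) (z τ) y' z' lam i j) τ := by
  have hyC := hy.ofReal_comp
  have hzC := hz.ofReal_comp
  fin_cases i <;> fin_cases j <;> simp only [laxM, laxMDeriv, of_apply, cons_val', cons_val_zero,
    cons_val_one, empty_val', cons_val_fin_one, Fin.zero_eta,
    Fin.mk_one, Fin.isValue]
  · exact hasDerivAt_const τ _
  · exact hzC.const_mul _
  · exact hyC.neg.div_const _
  · exact ((hyC.mul hzC).div_const _).const_add _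

theorem hasDerivAt_inv_sqrt_smul_laxM_apply {y z : ℝ → ℝ} {y' z' τ : ℝ}
    (hy : HasDerivAt y y' τ) (hz : HasDerivAt z z' τ) (hpos : 0 < 1 + y τ * z τ)
    (lam : ℂ) (i j : Fin 2) :
    HasDerivAt (fun s => ((√(1 + y s * z s))⁻¹ : ℝ) • laxM (y s) (z s) lam i j)
      (((√(1 + y τ * z τ))⁻¹ : ℝ) • (laxMDeriv (y τ) (z τ) y' z' lam
        - (((y' : ℂ) * z τ + y τ * z') / (2 * (1 + y τ * z τ))) • laxM (y τ) (z τ) lam) i j) τ := by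
  have hg : HasDerivAt (fun s => 1 + y s * z s) (y' * z τ + y τ * z') τ := (hy.mul hz).const_add 1
  refine ((hasDerivAt_inv_sqrt hg hpos).smul (hasDerivAt_laxM_apply hy hz lam i j)).congr_deriv ?_
  simp only [Matrix.sub_apply, Matrix.smul_apply, smul_eq_mul, Complex.real_smul]
  push_cast
  ring

theorem zeroCurvature_laxM_iff {y z yNext zPrev y' z' : ℂ} (hg : 1 + y * z ≠ 0) :
    (∀ lam : ℂ, lam ≠ 0 →
      laxMDeriv y z y' z' lam - ((y' * z + y * z') / (2 * (1 + y * z))) • laxM y z lam =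
        laxU yNext z lam * laxM y z lam - laxM y z lam * laxU y zPrev lam) ↔
    z' = (zPrev - z) * (1 + y * z) ∧ y' = -((yNext - y) * (1 + y * z)) := by
  obtain ⟨a, rfl⟩ : ∃ a, y' = a - (yNext - y) * (1 + y * z) := ⟨y' + (yNext - y) * (1 + y * z), by ring⟩
  obtain ⟨b, rfl⟩ : ∃ b, z' = b + (zPrev - z) * (1 + y * z) := ⟨z' - (zPrev - z) * (1 + y * z), by ring⟩
  constructor
  · intro h
    have h2 := sub_eq_zero.2 (h 2 two_ne_zero)
    rw [laxMDeriv_sub_smul_laxM_sub_commutator _ _ _ _ _ _ _ hg two_ne_zero, sub_eq_zero] at h2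
    obtain ⟨rfl, rfl⟩ := eq_zero_of_laxMDeriv_two_eq_smul_laxM h2
    simp
  · rintro ⟨hb, ha⟩ lam hlam
    obtain rfl := add_eq_right.1 hb
    obtain rfl := sub_eq_neg_self.1 ha
    rw [← sub_eq_zero, laxMDeriv_sub_smul_laxM_sub_commutator _ _ _ _ _ _ _ hg hlam]
    simp [laxMDeriv_zero_zero]

theorem Lmat_eq (z y : ℤ → ℝ → ℝ) (n : ℤ) (τ : ℝ) (lam : ℂ) :
    Lmat z y n τ lam = ((√(1 + y n τ * z n τ))⁻¹ : ℝ) • laxM (y n τ) (z n τ) lam :=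
  rfl

theorem Umat_eq (z y : ℤ → ℝ → ℝ) (n : ℤ) (τ : ℝ) (lam : ℂ) :
    Umat z y n τ lam = laxU (y n τ) (z (n - 1) τ) lam :=
  rfl

theorem zeroCurvature_Lmat_iff {z y : ℤ → ℝ → ℝ} {n : ℤ} {τ z' y' : ℝ}
    (hz : HasDerivAt (z n) z' τ) (hy : HasDerivAt (y n) y' τ) (hpos : 0 < 1 + y n τ * z n τ) :
    (∀ lam : ℂ, lam ≠ 0 → ∀ i j : Fin 2,
        HasDerivAt (fun s => Lmat z y n s lam i j)
          ((Umat z y (n + 1) τ lam * Lmat z y n τ lam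
            - Lmat z y n τ lam * Umat z y n τ lam) i j) τ) ↔
      z' = (z (n - 1) τ - z n τ) * (1 + y n τ * z n τ) ∧
        y' = -((y (n + 1) τ - y n τ) * (1 + y n τ * z n τ)) := by
  have hr : (√(1 + y n τ * z n τ))⁻¹ ≠ 0 := inv_ne_zero (Real.sqrt_ne_zero'.2 hpos)
  have hg : (1 : ℂ) + y n τ * z n τ ≠ 0 := by exact_mod_cast hpos.ne'
  have hL := hasDerivAt_inv_sqrt_smul_laxM_apply hy hz hpos
  simp only [Umat_eq, Lmat_eq, add_sub_cancel_right, smul_mul_assoc, mul_smul_comm, ← smul_sub]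
  calc _ ↔ ∀ lam : ℂ, lam ≠ 0 → laxMDeriv (y n τ) (z n τ) y' z' lam
          - (((y' : ℂ) * z n τ + y n τ * z') / (2 * (1 + y n τ * z n τ))) • laxM (y n τ) (z n τ) lam
          = laxU (y (n + 1) τ) (z n τ) lam * laxM (y n τ) (z n τ) lam
            - laxM (y n τ) (z n τ) lam * laxU (y n τ) (z (n - 1) τ) lam := by
        refine forall₂_congr fun lam _ => ?_
        rw [← smul_right_inj hr, ← Matrix.ext_iff]
        exact forall₂_congr fun i j => ⟨(hL lam i j).unique, fun h => h ▸ hL lam i j⟩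
    _ ↔ _ := (zeroCurvature_laxM_iff hg).trans (by norm_cast)

/-- The zero-curvature equation `∂_τ L_n = U_{n+1} L_n - L_n U_n` holds for every
spectral parameter `λ ≠ 0` if and only if `(z_n, y_n)` solve the semi-discrete
system `∂_τ z_n = (z_{n-1}-z_n)(1+y_n z_n)`, `-∂_τ y_n = (y_{n+1}-y_n)(1+y_n z_n)`. -/
theorem qTASEP_lax_pair_iff (z y : ℤ → ℝ → ℝ)
    (hzd : ∀ n, Differentiable ℝ (z n)) (hyd : ∀ n, Differentiable ℝ (y n))
    (hpos : ∀ n τ, 0 < 1 + y n τ * z n τ) :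
    (∀ lam : ℂ, lam ≠ 0 → ∀ n : ℤ, ∀ τ : ℝ, ∀ i j : Fin 2,
        HasDerivAt (fun s => Lmat z y n s lam i j)
          ((Umat z y (n + 1) τ lam * Lmat z y n τ lam
            - Lmat z y n τ lam * Umat z y n τ lam) i j) τ)
    ↔ (∀ n : ℤ, ∀ τ : ℝ,
        HasDerivAt (z n) ((z (n - 1) τ - z n τ) * (1 + y n τ * z n τ)) τ ∧
        HasDerivAt (y n) (-((y (n + 1) τ - y n τ) * (1 + y n τ * z n τ))) τ) := by
  constructor
  · intro h n τ
    have hz := (hzd n τ).hasDerivAt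
    have hy := (hyd n τ).hasDerivAt
    obtain ⟨hz', hy'⟩ := (zeroCurvature_Lmat_iff hz hy (hpos n τ)).1 fun lam hlam => h lam hlam n τ
    exact ⟨hz' ▸ hz, hy' ▸ hy⟩
  · intro h lam hlam n τ
    obtain ⟨hz, hy⟩ := h n τ
    exact (zeroCurvature_Lmat_iff hz hy (hpos n τ)).2 ⟨rfl, rfl⟩ lam hlam
end

section
/- Consider the recursion φ_{n+1} = L_n φ_n with L_n as in the q-TASEP Lax pair, where y_n = u·δ_{n,N} and z_n arbitrary positive. If φ_n = (λ^{-n}, 0)ᵀ for all n ≤ -M (some M), then φ_n^{(2)} = 0 for all n ≤ N and φ_n^{(2)} = -(u/√(1+u z_N))·λ^{n-N-2}·φ_N^{(1)} for all n ≥ N+1, with φ_N^{(1)} = λ^{-N}. -/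
open Matrix

/-- Solution of the second component of the Jost recursion `φ_{n+1} = L_n φ_n`
for the q-TASEP Lax matrix with final-time condition `y_n = u δ_{n,N}`:
if `φ_n = (λ^{-n}, 0)ᵀ` for all sufficiently negative `n`, then `φ_n^{(2)} = 0`
for `n ≤ N`, `φ_N^{(1)} = λ^{-N}`, and
`φ_n^{(2)} = -(u/√(1+u z_N)) λ^{n-N-2} φ_N^{(1)}` for `n ≥ N+1`. -/
theorem qTASEP_jost_solution (z : ℤ → ℝ) (hz : ∀ n, 0 < z n) (u : ℝ) (hu : 0 < u)
    (N : ℤ) (lam : ℂ) (hlam : lam ≠ 0) (φ : ℤ → Fin 2 → ℂ)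
    (hrec : ∀ n : ℤ, φ (n + 1) =
      Matrix.mulVec
        (((Real.sqrt (1 + (if n = N then u else 0) * z n))⁻¹ : ℝ) •
          !![1 / lam, (lam - 1 / lam) * (z n : ℂ);
             -(if n = N then (u : ℂ) else 0) / lam,
             lam + (if n = N then (u : ℂ) else 0) * (z n : ℂ) / lam])
        (φ n))
    (hbc : ∃ M : ℤ, ∀ n ≤ M, φ n = ![lam ^ (-n), 0]) :
    (∀ n ≤ N, φ n 1 = 0) ∧ φ N 0 = lam ^ (-N) ∧
    (∀ n : ℤ, N + 1 ≤ n → φ n 1 =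
      -((u : ℂ) / (Real.sqrt (1 + u * z N) : ℝ)) * lam ^ (n - N - 2) * φ N 0) := by
  obtain ⟨M, hM⟩ := hbc
  have main : ∀ n, min M N ≤ n → (n ≤ N → φ n = ![lam ^ (-n), 0]) := by
    refine Int.le_induction ?_ ?_
    · intro _
      exact hM _ (min_le_left _ _)
    · intro n hn ih hn1
      have hne : n ≠ N := by omega
      have h := hrec n
      rw [ih (by omega)] at h
      rw [h]
      funext i
      fin_cases i <;>
        simp [Matrix.mulVec, dotProduct, Fin.sum_univ_two, hne,
          zpow_add₀ hlam, _root_.zpow_neg]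
  have key : ∀ n ≤ N, φ n = ![lam ^ (-n), 0] := by
    intro n hn
    rcases le_or_gt n (min M N) with h | h
    · exact hM n (h.trans (min_le_left _ _))
    · exact main n h.le hn
  have hN := key N le_rfl
  refine ⟨fun n hn => by rw [key n hn]; simp, by rw [hN]; simp, ?_⟩
  have hs : (0:ℝ) < Real.sqrt (1 + u * z N) := Real.sqrt_pos.mpr (by nlinarith [hz N])
  have hsC : ((Real.sqrt (1 + u * z N) : ℝ) : ℂ) ≠ 0 := by exact_mod_cast hs.ne'
  refine Int.le_induction ?_ ?_
  · have h := hrec N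
    rw [hN] at h
    rw [h, hN]
    simp [Matrix.mulVec, dotProduct, Fin.sum_univ_two,
      zpow_add₀ hlam, zpow_sub₀ hlam, _root_.zpow_neg]
    ring
  · intro n hn ih
    have hne : n ≠ N := by omega
    have h := hrec n
    rw [h]
    simp [Matrix.mulVec, dotProduct, Fin.sum_univ_two, hne, ih,
      zpow_add₀ hlam, zpow_sub₀ hlam, _root_.zpow_neg]
    ring
end
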